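/- Let p ≥ 1, d ≥ 1 be an integer, b ≥ 0 and α > b + d/p, and let c0 > 0. Let (ξ_{l,r}), for l ∈ ℕ and 1 ≤ r ≤ N_l where N_l ≤ c0·2^{ld}, be independent standard p-exponential random variables. Then there exist constants c1, c2 > 0 such that for every r > 0, P( Σ_{l≥0} Σ_{r=1}^{N_l} 2^{−p l (α−b)} |ξ_{l,r}|^p ≥ r^p ) ≤ c1 · exp(−c2 r^p). (This is the tail bound Π'(‖θ‖_{B^b_{pp}} ≥ r) ≤ c1 e^{−c2 r^p} for the Besov prior Π' expressed through wavelet coefficients.) -/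

import Mathlib

/-!
A union bound. Put `β = α - b`, `ε = (pβ - d)/2 > 0` and `κ = (1 - 2^{-ε})/(2c₀)`, and split the
threshold `t = r^p` into the pieces `κ 2^{lε} 2^{-plβ} t`: since `N_l ≤ c₀ 2^{ld}` and
`2^{ld} 2^{lε} 2^{-plβ} = 2^{-lε}`, all pieces together add up to at most `t/2`. If the series
reaches `t`, some term `2^{-plβ}|ξ_{l,r}|^p` reaches its piece, i.e. `|ξ_{l,r}|^p ≥ κ 2^{lε} t`.
A Chernoff bound gives `Exp(p;0,1)(|x|^p ≥ s) ≲ e^{-s/(2p)}`, and for `t ≥ 1` the sum over levels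
`Σ_l 2^{ld} exp(-c 2^{lε} t)` is `≲ e^{-ct}`, because `exp(-c 2^{lε})` decays faster than any
geometric sequence. For `t < 1` the bound holds trivially once `c₁ ≥ e^{c₂}`.
-/

open MeasureTheory Real ProbabilityTheory

/-- The standard univariate `p`-exponential distribution `Exp(p;0,1)`: the probability measure
on `ℝ` with density proportional to `exp(−|x|^p/p)`. -/
noncomputable def stdPExp (p : ℝ) : Measure ℝ :=
  (∫⁻ x : ℝ, ENNReal.ofReal (Real.exp (-(|x| ^ p / p))))⁻¹ •
    MeasureTheory.volume.withDensity fun x => ENNReal.ofReal (Real.exp (-(|x| ^ p / p)))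

open scoped ENNReal Nat

lemma integrable_exp_neg_mul_abs_rpow {p b : ℝ} (hp : 0 < p) (hb : 0 < b) :
    Integrable fun x : ℝ => exp (-b * |x| ^ p) := by
  have h := (integrable_fun_norm_addHaar (volume : Measure ℝ) (f := fun y => exp (-b * y ^ p))).2
  simp only [Module.finrank_self, tsub_self, pow_zero, one_smul, Real.norm_eq_abs] at h
  refine h ?_
  simpa using integrableOn_rpow_mul_exp_neg_mul_rpow (s := 0) (by norm_num) hp hb

lemma exists_stdPExp_setOf_le_abs_rpow_le {p : ℝ} (hp : 0 < p) :
    ∃ C ≥ (0 : ℝ), ∀ s : ℝ,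
      stdPExp p {x | s ≤ |x| ^ p} ≤ ENNReal.ofReal (C * exp (-(s / (2 * p)))) := by
  set Z := ∫⁻ x : ℝ, ENNReal.ofReal (exp (-(|x| ^ p / p)))
  have hZ : Z ≠ 0 := by
    refine ((lintegral_pos_iff_support (by fun_prop)).2 ?_).ne'
    simp [Function.support, exp_pos]
  set G := ∫⁻ x : ℝ, ENNReal.ofReal (exp (-(1 / (2 * p)) * |x| ^ p))
  have hG : G ≠ ⊤ :=
    (integrable_exp_neg_mul_abs_rpow hp (by positivity)).lintegral_lt_top.ne
  refine ⟨(Z⁻¹ * G).toReal, ENNReal.toReal_nonneg, fun s => ?_⟩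
  have hS : MeasurableSet {x : ℝ | s ≤ |x| ^ p} := measurableSet_le (by fun_prop) (by fun_prop)
  have hchernoff : ∀ x ∈ {x : ℝ | s ≤ |x| ^ p}, ENNReal.ofReal (exp (-(|x| ^ p / p))) ≤
      ENNReal.ofReal (exp (-(s / (2 * p)))) * ENNReal.ofReal (exp (-(1 / (2 * p)) * |x| ^ p)) := by
    intro x hx
    rw [← ENNReal.ofReal_mul (exp_pos _).le, ← exp_add]
    refine ENNReal.ofReal_le_ofReal (exp_le_exp.2 ?_)
    have : s / (2 * p) ≤ |x| ^ p / (2 * p) := by gcongr; exact hx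
    field_simp
    field_simp at this
    linarith
  calc stdPExp p {x | s ≤ |x| ^ p}
      = Z⁻¹ * ∫⁻ x in {x : ℝ | s ≤ |x| ^ p}, ENNReal.ofReal (exp (-(|x| ^ p / p))) := by
        rw [stdPExp, Measure.smul_apply, withDensity_apply _ hS, smul_eq_mul]
    _ ≤ Z⁻¹ * (ENNReal.ofReal (exp (-(s / (2 * p)))) * G) := by
        gcongr
        calc _ ≤ ∫⁻ x in {x : ℝ | s ≤ |x| ^ p}, ENNReal.ofReal (exp (-(s / (2 * p)))) *
              ENNReal.ofReal (exp (-(1 / (2 * p)) * |x| ^ p)) := setLIntegral_mono' hS hchernoff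
          _ ≤ _ := by
            rw [lintegral_const_mul' _ _ ENNReal.ofReal_ne_top]
            gcongr
            exact setLIntegral_le_lintegral _ _
    _ = ENNReal.ofReal ((Z⁻¹ * G).toReal * exp (-(s / (2 * p)))) := by
        rw [ENNReal.ofReal_mul ENNReal.toReal_nonneg, ENNReal.ofReal_toReal
          (ENNReal.mul_ne_top (ENNReal.inv_ne_top.2 hZ) hG)]
        ring

lemma measure_ofReal_mul_le_ofReal_mul_abs_rpow_le {Ω : Type*} [MeasurableSpace Ω]
    {μ : Measure Ω} {X : Ω → ℝ} {p C u w : ℝ} (hX : Measurable X)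
    (hdist : Measure.map X μ = stdPExp p)
    (hC : ∀ s : ℝ, stdPExp p {x | s ≤ |x| ^ p} ≤ ENNReal.ofReal (C * exp (-(s / (2 * p)))))
    (hu : 0 ≤ u) (hw : 0 < w) (t : ℝ) :
    μ {ω | ENNReal.ofReal (u * w) * ENNReal.ofReal t ≤ ENNReal.ofReal (w * |X ω| ^ p)} ≤
      ENNReal.ofReal (C * exp (-(u * t / (2 * p)))) := by
  have hsub : {ω | ENNReal.ofReal (u * w) * ENNReal.ofReal t ≤ ENNReal.ofReal (w * |X ω| ^ p)} ⊆
      X ⁻¹' {x | u * t ≤ |x| ^ p} := by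
    intro ω hω
    rw [Set.mem_ofPred_eq, ← ENNReal.ofReal_mul (by positivity),
      ENNReal.ofReal_le_ofReal_iff (by positivity)] at hω
    exact le_of_mul_le_mul_left (by linarith) hw
  calc _ ≤ μ (X ⁻¹' {x | u * t ≤ |x| ^ p}) := measure_mono hsub
    _ = stdPExp p {x | u * t ≤ |x| ^ p} := by
        rw [← hdist, Measure.map_apply hX (measurableSet_le (by fun_prop) (by fun_prop))]
    _ ≤ _ := hC _

lemma summable_pow_mul_exp_neg_mul_pow {x y c : ℝ} (hx : 1 < x) (hy : 0 ≤ y) (hc : 0 < c) :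
    Summable fun l : ℕ => y ^ l * exp (-(c * x ^ l)) := by
  obtain ⟨n, hn⟩ := pow_unbounded_of_one_lt y hx
  have hxn : 0 < x ^ n := pow_pos (zero_lt_one.trans hx) n
  -- `exp (-u) ≤ n! / u ^ n` with `u = c x^l` turns the terms into a geometric sequence.
  have hbound : ∀ l : ℕ, y ^ l * exp (-(c * x ^ l)) ≤ (n ! / c ^ n) * (y / x ^ n) ^ l := by
    intro l
    have hu : 0 < c * x ^ l := mul_pos hc (pow_pos (zero_lt_one.trans hx) l)
    have hexp : exp (-(c * x ^ l)) ≤ n ! / (c * x ^ l) ^ n := by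
      rw [exp_neg, inv_le_comm₀ (exp_pos _) (by positivity), inv_div,
        div_le_iff₀ (by positivity)]
      exact (div_le_iff₀ (by positivity)).1 (pow_div_factorial_le_exp _ hu.le n)
    calc y ^ l * exp (-(c * x ^ l)) ≤ y ^ l * (n ! / (c * x ^ l) ^ n) := by gcongr
      _ = (n ! / c ^ n) * (y / x ^ n) ^ l := by
        rw [mul_pow, ← pow_mul, div_pow, ← pow_mul, mul_comm l n]
        field_simp
  refine Summable.of_nonneg_of_le (fun l => by positivity) hbound
    ((summable_geometric_of_lt_one (by positivity) ?_).mul_left _)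
  rwa [div_lt_one hxn]

lemma tsum_pow_mul_exp_neg_mul_pow_le {x y c t : ℝ} (hx : 1 < x) (hy : 0 ≤ y) (hc : 0 < c)
    (ht : 1 ≤ t) :
    ∑' l : ℕ, y ^ l * exp (-(c * t * x ^ l)) ≤
      exp c * (∑' l : ℕ, y ^ l * exp (-(c * x ^ l))) * exp (-c * t) := by
  rw [mul_assoc, ← tsum_mul_right, ← tsum_mul_left]
  refine (summable_pow_mul_exp_neg_mul_pow hx hy (by positivity)).tsum_le_tsum (fun l => ?_)
    (((summable_pow_mul_exp_neg_mul_pow hx hy hc).mul_right _).mul_left _)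
  have hxl : 1 ≤ x ^ l := one_le_pow₀ hx.le
  calc y ^ l * exp (-(c * t * x ^ l)) ≤ y ^ l * exp (c + -(c * x ^ l) + -c * t) := by
        gcongr
        nlinarith [mul_nonneg (mul_nonneg hc.le (sub_nonneg.2 hxl)) (sub_nonneg.2 ht)]
    _ = exp c * (y ^ l * exp (-(c * x ^ l)) * exp (-c * t)) := by
        rw [exp_add, exp_add]; ring

lemma ENNReal.exists_mul_le_of_le_tsum {ι : Type*} {a x : ι → ℝ≥0∞} {t : ℝ≥0∞}
    (ha : ∑' i, a i < 1) (ht0 : t ≠ 0) (ht : t ≠ ∞) (h : t ≤ ∑' i, x i) :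
    ∃ i, a i * t ≤ x i := by
  by_contra! hlt
  have : ∑' i, x i < t :=
    calc ∑' i, x i ≤ ∑' i, a i * t := ENNReal.tsum_le_tsum fun i => (hlt i).le
      _ = (∑' i, a i) * t := ENNReal.tsum_mul_right
      _ < 1 * t := ENNReal.mul_lt_mul_left ht0 ht ha
      _ = t := one_mul t
  exact (h.trans_lt this).false

lemma measure_setOf_le_tsum_le {Ω ι : Type*} [MeasurableSpace Ω] [Countable ι] (μ : Measure Ω)
    {X : ι → Ω → ℝ≥0∞} {a : ι → ℝ≥0∞} {t : ℝ≥0∞} (ha : ∑' i, a i < 1) (ht0 : t ≠ 0)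
    (ht : t ≠ ∞) :
    μ {ω | t ≤ ∑' i, X i ω} ≤ ∑' i, μ {ω | a i * t ≤ X i ω} :=
  calc μ {ω | t ≤ ∑' i, X i ω} ≤ μ (⋃ i, {ω | a i * t ≤ X i ω}) :=
        measure_mono fun _ hω => Set.mem_iUnion.2 (ENNReal.exists_mul_le_of_le_tsum ha ht0 ht hω)
    _ ≤ _ := measure_iUnion_le _

lemma ENNReal.tsum_sigma_ofReal_le {N : ℕ → ℕ} {g u : ℕ → ℝ} (hg : ∀ l, 0 ≤ g l)
    (hN : ∀ l, N l * g l ≤ u l) (hu : Summable u) :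
    ∑' i : Σ l : ℕ, Fin (N l), ENNReal.ofReal (g i.1) ≤ ENNReal.ofReal (∑' l, u l) := by
  rw [ENNReal.ofReal_tsum_of_nonneg
      (fun l => (mul_nonneg (Nat.cast_nonneg _) (hg l)).trans (hN l)) hu,
    ENNReal.tsum_sigma']
  refine ENNReal.tsum_le_tsum fun l => ?_
  rw [tsum_fintype]
  dsimp only
  rw [Finset.sum_const, Finset.card_univ, Fintype.card_fin, nsmul_eq_mul,
    ← ENNReal.ofReal_natCast, ← ENNReal.ofReal_mul (Nat.cast_nonneg _)]
  exact ENNReal.ofReal_le_ofReal (hN l)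

lemma ENNReal.tsum_sigma_ofReal_lt_one {N : ℕ → ℕ} {g : ℕ → ℝ} {q : ℝ} (hg : ∀ l, 0 ≤ g l)
    (hq0 : 0 ≤ q) (hq : q < 1) (hN : ∀ l, N l * g l ≤ (1 - q) / 2 * q ^ l) :
    ∑' i : Σ l : ℕ, Fin (N l), ENNReal.ofReal (g i.1) < 1 :=
  calc _ ≤ ENNReal.ofReal (∑' l : ℕ, (1 - q) / 2 * q ^ l) :=
        ENNReal.tsum_sigma_ofReal_le hg hN ((summable_geometric_of_lt_one hq0 hq).mul_left _)
    _ = ENNReal.ofReal (1 / 2) := by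
        rw [tsum_mul_left, tsum_geometric_of_lt_one hq0 hq]
        field_simp [(by linarith : 1 - q ≠ 0)]
    _ < 1 := by norm_num

lemma tsum_sigma_ofReal_mul_exp_neg_le {N : ℕ → ℕ} {d : ℕ} {c0 C c t x : ℝ}
    (hc0 : 0 ≤ c0) (hN : ∀ l, (N l : ℝ) ≤ c0 * 2 ^ (l * d)) (hC : 0 ≤ C) (hc : 0 < c)
    (ht : 1 ≤ t) (hx : 1 < x) :
    ∑' i : Σ l : ℕ, Fin (N l), ENNReal.ofReal (C * exp (-(c * t * x ^ i.1))) ≤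
      ENNReal.ofReal (c0 * C * exp c * (∑' l : ℕ, ((2 : ℝ) ^ d) ^ l * exp (-(c * x ^ l))) *
        exp (-c * t)) := by
  have hNterm : ∀ l, N l * (C * exp (-(c * t * x ^ l))) ≤
      c0 * C * (((2 : ℝ) ^ d) ^ l * exp (-(c * t * x ^ l))) := fun l =>
    calc N l * (C * exp (-(c * t * x ^ l))) ≤ c0 * 2 ^ (l * d) * (C * exp (-(c * t * x ^ l))) := by
          gcongr; exact hN l
      _ = _ := by rw [mul_comm l d, pow_mul]; ring
  refine (ENNReal.tsum_sigma_ofReal_le (fun l => by positivity) hNterm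
    ((summable_pow_mul_exp_neg_mul_pow hx (by positivity) (by positivity)).mul_left _)).trans
    (ENNReal.ofReal_le_ofReal ?_)
  rw [tsum_mul_left, mul_assoc (c0 * C), mul_assoc (c0 * C)]
  gcongr
  exact tsum_pow_mul_exp_neg_mul_pow_le hx (by positivity) hc ht

lemma natCast_mul_level_weight_le {n c0 p β ε : ℝ} {d l : ℕ} (hc0 : 0 < c0) (hε0 : 0 ≤ ε)
    (hε : 2 * ε = p * β - d) (hn : n ≤ c0 * 2 ^ (l * d)) :
    n * ((1 - 2 ^ (-ε)) / (2 * c0) * ((2 : ℝ) ^ ε) ^ l * (2 : ℝ) ^ (-(p * l * β))) ≤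
      (1 - 2 ^ (-ε)) / 2 * ((2 : ℝ) ^ (-ε)) ^ l := by
  have hq : (2 : ℝ) ^ (-ε) ≤ 1 := rpow_le_one_of_one_le_of_nonpos one_le_two (neg_nonpos.2 hε0)
  have hexp : (2 : ℝ) ^ (l * d) * ((2 : ℝ) ^ ε) ^ l * (2 : ℝ) ^ (-(p * l * β)) =
      ((2 : ℝ) ^ (-ε)) ^ l := by
    rw [← rpow_natCast, ← rpow_natCast, ← rpow_natCast, ← rpow_mul zero_le_two,
      ← rpow_mul zero_le_two, ← rpow_add zero_lt_two, ← rpow_add zero_lt_two]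
    congr 1
    push_cast
    linear_combination (l : ℝ) * hε
  calc _ ≤ c0 * 2 ^ (l * d) * ((1 - 2 ^ (-ε)) / (2 * c0) * ((2 : ℝ) ^ ε) ^ l *
        (2 : ℝ) ^ (-(p * l * β))) := by
        gcongr
    _ = (1 - 2 ^ (-ε)) / 2 * ((2 : ℝ) ^ (-ε)) ^ l := by
        rw [← hexp]
        field_simp

lemma exists_measure_ofReal_le_tsum_le {Ω : Type*} [MeasurableSpace Ω] (μ : Measure Ω)
    {p β c0 : ℝ} (hp : 0 < p) {d : ℕ} (hβ : d < p * β) (hc0 : 0 < c0) {N : ℕ → ℕ}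
    (hN : ∀ l, (N l : ℝ) ≤ c0 * 2 ^ (l * d))
    {ξ : (Σ l : ℕ, Fin (N l)) → Ω → ℝ} (hmeas : ∀ i, Measurable (ξ i))
    (hdist : ∀ i, Measure.map (ξ i) μ = stdPExp p) :
    ∃ K ≥ (0 : ℝ), ∃ c > (0 : ℝ), ∀ t : ℝ, 1 ≤ t →
      μ {ω | ENNReal.ofReal t ≤ ∑' i : Σ l : ℕ, Fin (N l),
            ENNReal.ofReal ((2 : ℝ) ^ (-(p * (i.1 : ℝ) * β)) * |ξ i ω| ^ p)}
        ≤ ENNReal.ofReal (K * exp (-c * t)) := by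
  obtain ⟨C, hC, htail⟩ := exists_stdPExp_setOf_le_abs_rpow_le hp
  set ε := (p * β - d) / 2
  have hε : 0 < ε := by simp only [ε]; linarith
  set x : ℝ := 2 ^ ε
  have hx : 1 < x := one_lt_rpow one_lt_two hε
  set q : ℝ := 2 ^ (-ε)
  have hq : q < 1 := rpow_lt_one_of_one_lt_of_neg one_lt_two (neg_lt_zero.2 hε)
  set κ := (1 - q) / (2 * c0)
  set w : ℕ → ℝ := fun l => (2 : ℝ) ^ (-(p * l * β))
  have hw : ∀ l, 0 < w l := fun l => rpow_pos_of_pos two_pos _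
  set c := κ / (2 * p)
  have hc : 0 < c := by positivity
  refine ⟨c0 * C * exp c * ∑' l : ℕ, ((2 : ℝ) ^ d) ^ l * exp (-(c * x ^ l)),
    by positivity, c, hc, fun t ht => ?_⟩
  have hweights : ∑' i : Σ l : ℕ, Fin (N l), ENNReal.ofReal (κ * x ^ i.1 * w i.1) < 1 :=
    ENNReal.tsum_sigma_ofReal_lt_one (g := fun l => κ * x ^ l * w l)
      (fun l => (mul_pos (by positivity) (hw l)).le) (by positivity) hq fun l =>
        natCast_mul_level_weight_le hc0 hε.le (by simp only [ε]; ring) (hN l)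
  calc _ ≤ ∑' i : Σ l : ℕ, Fin (N l), μ {ω | ENNReal.ofReal (κ * x ^ i.1 * w i.1) *
          ENNReal.ofReal t ≤ ENNReal.ofReal (w i.1 * |ξ i ω| ^ p)} :=
        measure_setOf_le_tsum_le μ hweights (by simp; linarith) ENNReal.ofReal_ne_top
    _ ≤ ∑' i : Σ l : ℕ, Fin (N l), ENNReal.ofReal (C * exp (-(c * t * x ^ i.1))) := by
        refine ENNReal.tsum_le_tsum fun i => ?_
        convert measure_ofReal_mul_le_ofReal_mul_abs_rpow_le (u := κ * x ^ i.1) (hmeas i)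
          (hdist i) htail (by positivity) (hw i.1) t using 4
        simp only [c]
        field_simp
    _ ≤ _ := tsum_sigma_ofReal_mul_exp_neg_le hc0.le hN hC hc ht hx

lemma measure_le_ofReal_mul_exp_of_forall_one_le {Ω : Type*} [MeasurableSpace Ω]
    {μ : Measure Ω} [IsProbabilityMeasure μ] {E : ℝ → Set Ω} {K c : ℝ} (hK : 0 ≤ K)
    (hc : 0 ≤ c) (h : ∀ t : ℝ, 1 ≤ t → μ (E t) ≤ ENNReal.ofReal (K * exp (-c * t))) (t : ℝ) :
    μ (E t) ≤ ENNReal.ofReal ((K + exp c) * exp (-c * t)) := by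
  rcases le_or_gt 1 t with ht | ht
  · refine (h t ht).trans (ENNReal.ofReal_le_ofReal ?_)
    gcongr
    linarith [exp_pos c]
  · refine prob_le_one.trans (ENNReal.one_le_ofReal.2 ?_)
    calc (1 : ℝ) ≤ exp c * exp (-c * t) := by
          rw [← exp_add]; exact one_le_exp (by nlinarith)
      _ ≤ (K + exp c) * exp (-c * t) := by gcongr; linarith

theorem besov_prior_tail_bound_general {Ω : Type*} [MeasureSpace Ω]
    [IsProbabilityMeasure (ℙ : Measure Ω)]
    (p : ℝ) (hp : 1 ≤ p) (d : ℕ) (b α c0 : ℝ)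
    (hα : b + d / p < α) (hc0 : 0 < c0) (N : ℕ → ℕ)
    (hN : ∀ l, (N l : ℝ) ≤ c0 * 2 ^ (l * d))
    (ξ : (Σ l : ℕ, Fin (N l)) → Ω → ℝ) (hmeas : ∀ i, Measurable (ξ i))
    (hdist : ∀ i, Measure.map (ξ i) ℙ = stdPExp p) :
    ∃ c1 > (0 : ℝ), ∃ c2 > (0 : ℝ), ∀ r : ℝ, 0 < r →
      ℙ {ω | ENNReal.ofReal (r ^ p) ≤ ∑' i : Σ l : ℕ, Fin (N l),
            ENNReal.ofReal ((2 : ℝ) ^ (-(p * (i.1 : ℝ) * (α - b))) * |ξ i ω| ^ p)}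
        ≤ ENNReal.ofReal (c1 * Real.exp (-c2 * r ^ p)) := by
  have hp0 : 0 < p := zero_lt_one.trans_le hp
  have hd : (d : ℝ) < p * (α - b) := by
    have := (div_lt_iff₀' hp0).1 (lt_sub_iff_add_lt'.2 hα)
    linarith
  obtain ⟨K, hK, c, hc, hbound⟩ :=
    exists_measure_ofReal_le_tsum_le ℙ hp0 hd hc0 hN hmeas hdist
  exact ⟨K + exp c, by positivity, c, hc, fun r _ =>
    measure_le_ofReal_mul_exp_of_forall_one_le hK hc.le hbound (r ^ p)⟩

/-- Tail bound for the Besov prior expressed in wavelet coefficients: for `p ≥ 1`, `b ≥ 0`,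
`α > b + d/p` and independent standard `p`-exponential variables `ξ_{l,r}` (`1 ≤ r ≤ N_l`,
`N_l ≤ c₀ 2^{ld}`), there exist `c₁, c₂ > 0` such that for all `r > 0`,
`P(Σ_{l,r} 2^{−pl(α−b)} |ξ_{l,r}|^p ≥ r^p) ≤ c₁ exp(−c₂ r^p)`. -/
theorem besov_prior_tail_bound {Ω : Type*} [MeasureSpace Ω]
    [IsProbabilityMeasure (ℙ : Measure Ω)]
    (p : ℝ) (hp : 1 ≤ p) (d : ℕ) (hd : 1 ≤ d) (b α c0 : ℝ) (hb : 0 ≤ b)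
    (hα : b + d / p < α) (hc0 : 0 < c0) (N : ℕ → ℕ)
    (hN : ∀ l, (N l : ℝ) ≤ c0 * 2 ^ (l * d))
    (ξ : (Σ l : ℕ, Fin (N l)) → Ω → ℝ) (hmeas : ∀ i, Measurable (ξ i))
    (hdist : ∀ i, Measure.map (ξ i) ℙ = stdPExp p)
    (hindep : iIndepFun ξ ℙ) :
    ∃ c1 > (0 : ℝ), ∃ c2 > (0 : ℝ), ∀ r : ℝ, 0 < r →
      ℙ {ω | ENNReal.ofReal (r ^ p) ≤ ∑' i : Σ l : ℕ, Fin (N l),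
            ENNReal.ofReal ((2 : ℝ) ^ (-(p * (i.1 : ℝ) * (α - b))) * |ξ i ω| ^ p)}
        ≤ ENNReal.ofReal (c1 * Real.exp (-c2 * r ^ p)) :=
  besov_prior_tail_bound_general p hp d b α c0 hα hc0 N hN ξ hmeas hdist
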